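/- Let n be a natural number, w : Fin n → ℕ a weight function, d a natural number, and P a multivariate polynomial over ℂ in variables indexed by Fin n that is weighted homogeneous of degree d with respect to w. Then there exist multivariate polynomials Q and R over ℝ in variables indexed by Fin n ⊕ Fin n, each weighted homogeneous of degree d with respect to the weight function assigning weight w(i) to both copies of the i-th variable, such that for all x, y : Fin n → ℝ one has P evaluated at the point (x(0)+i·y(0), …, x(n−1)+i·y(n−1)) equals Q(x,y) + i·R(x,y), where i is the imaginary unit. -/

import Mathlib

/-!
Substituting `X i ↦ X (inl i) + I * X (inr i)` turns `P` into a complex polynomial `S` in the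
doubled variables; it is weighted homogeneous of degree `d` because each substituted variable is
homogeneous of weight `w i`. Taking real and imaginary parts of the coefficients of `S` gives `Q`
and `R`, whose supports lie in that of `S`, and on real points `S` evaluates to `Q + I * R`.
-/

namespace MvPolynomial

variable {R S σ τ M : Type*} [CommSemiring R] [CommSemiring S] [AddCommMonoid M]

theorem IsWeightedHomogeneous.aeval [Algebra R S] {v : σ → M} {w : τ → M}
    {φ : MvPolynomial σ R} {m : M} (hφ : φ.IsWeightedHomogeneous v m)
    {g : σ → MvPolynomial τ S} (hg : ∀ i, (g i).IsWeightedHomogeneous w (v i)) :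
    (aeval g φ).IsWeightedHomogeneous w m := by
  induction hφ using IsWeightedHomogeneous.induction_on with
  | zero => simpa using isWeightedHomogeneous_zero S w m
  | add p q _ _ hp hq => simpa using hp.add hq
  | monomial d r hd =>
    rw [aeval_monomial, algebraMap_apply, ← hd, Finsupp.weight_apply]
    exact (IsWeightedHomogeneous.prod _ _ _ fun i _ => (hg i).pow (d i)).C_mul _

noncomputable def re (p : MvPolynomial σ ℂ) : MvPolynomial σ ℝ :=
  AddMonoidAlgebra.map Complex.reAddGroupHom p

noncomputable def im (p : MvPolynomial σ ℂ) : MvPolynomial σ ℝ :=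
  AddMonoidAlgebra.map Complex.imAddGroupHom p

@[simp]
theorem coeff_re (p : MvPolynomial σ ℂ) (d : σ →₀ ℕ) : coeff d p.re = (coeff d p).re := rfl

@[simp]
theorem coeff_im (p : MvPolynomial σ ℂ) (d : σ →₀ ℕ) : coeff d p.im = (coeff d p).im := rfl

theorem IsWeightedHomogeneous.re {w : σ → M} {p : MvPolynomial σ ℂ} {m : M}
    (hp : p.IsWeightedHomogeneous w m) : p.re.IsWeightedHomogeneous w m :=
  fun d hd => hp fun h => hd (by rw [coeff_re, h, Complex.zero_re])

theorem IsWeightedHomogeneous.im {w : σ → M} {p : MvPolynomial σ ℂ} {m : M}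
    (hp : p.IsWeightedHomogeneous w m) : p.im.IsWeightedHomogeneous w m :=
  fun d hd => hp fun h => hd (by rw [coeff_im, h, Complex.zero_im])

theorem map_re_add_I_mul_map_im (p : MvPolynomial σ ℂ) :
    map Complex.ofRealHom p.re + C Complex.I * map Complex.ofRealHom p.im = p := by
  ext d
  simp [coeff_map, Complex.ext_iff]

theorem eval_ofReal (p : MvPolynomial σ ℂ) (z : σ → ℝ) :
    eval (fun i => (z i : ℂ)) p = (eval z p.re : ℂ) + Complex.I * (eval z p.im : ℂ) := by
  conv_lhs => rw [← map_re_add_I_mul_map_im p]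
  have eval_map_ofReal (q : MvPolynomial σ ℝ) :
      eval (fun i => (z i : ℂ)) (map Complex.ofRealHom q) = eval z q :=
    (eval_map _ _ q).trans (eval₂_comp _ z q).symm
  rw [map_add, map_mul, eval_C, eval_map_ofReal, eval_map_ofReal]

end MvPolynomial

open MvPolynomial

/-- If `P` is a weighted homogeneous complex polynomial of degree `d` (weights `w`),
then substituting `X i ↦ x i + I * y i` produces real and imaginary parts that are
weighted homogeneous real polynomials of the same degree `d` in the doubled set of
variables, each copy of the `i`-th variable carrying the weight `w i`. -/
theorem realImaginaryParts_isWeightedHomogeneous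
    (n : ℕ) (w : Fin n → ℕ) (d : ℕ) (P : MvPolynomial (Fin n) ℂ)
    (hP : P.IsWeightedHomogeneous w d) :
    ∃ Q R : MvPolynomial (Fin n ⊕ Fin n) ℝ,
      Q.IsWeightedHomogeneous (Sum.elim w w) d ∧
      R.IsWeightedHomogeneous (Sum.elim w w) d ∧
      ∀ x y : Fin n → ℝ,
        MvPolynomial.eval (fun i => (x i : ℂ) + Complex.I * (y i : ℂ)) P =
          ((MvPolynomial.eval (Sum.elim x y) Q : ℝ) : ℂ) +
            Complex.I * ((MvPolynomial.eval (Sum.elim x y) R : ℝ) : ℂ) := by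
  set z : Fin n → MvPolynomial (Fin n ⊕ Fin n) ℂ :=
    fun i => X (Sum.inl i) + C Complex.I * X (Sum.inr i)
  have hz (i : Fin n) : (z i).IsWeightedHomogeneous (Sum.elim w w) (w i) :=
    (isWeightedHomogeneous_X ℂ _ (Sum.inl i)).add
      ((isWeightedHomogeneous_X ℂ _ (Sum.inr i)).C_mul _)
  have hS : (aeval z P).IsWeightedHomogeneous (Sum.elim w w) d := hP.aeval hz
  refine ⟨(aeval z P).re, (aeval z P).im, hS.re, hS.im, fun x y => ?_⟩
  rw [← eval_ofReal]
  change aeval _ P = aeval _ (aeval z P)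
  rw [comp_aeval_apply]
  congr 2 with i
  simp [z]
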